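/- arXiv:2008.03032 — 3 statements merged into one kernel-verified Lean document; each statement's English description precedes it below -/
import Mathlib

section
/- The bound r in the cycle-generation lemma is sharp: if G is a cycle of length r, then G equals the ball B_{r/2}(v) for any vertex v, and the unique cycle of G (which has length r) is not generated by cycles of length at most r - 1. -/
/-! A graph `G` that is a single cycle of length `r` is connected and every vertex lies on a
closed walk of length `r` through `v`, so its distance from `v` is at most `⌊r/2⌋`. If `r` is
even, `G` is bipartite, so the two ends of an edge have distances from `v` of different parity
and the ball keeps every edge. Every vertex of `G` has degree two, so the vertex set of any cycle
of `G` is closed under adjacency; it therefore contains all `r` vertices, and `G` has no cycle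
shorter than `r`: the family of shorter cycles is empty and generates only the empty edge set. -/

open SimpleGraph

universe u

namespace LocalSep

variable {V : Type u}

/-- The ball of radius `r/2` around `v`: vertices of distance at most `⌊r/2⌋` from `v`;
if `r` is even, edges joining two vertices of distance exactly `r/2` are removed. -/
def ballVerts (G : SimpleGraph V) (v : V) (r : ℕ) : Set V :=
  {u | G.Reachable v u ∧ G.dist v u ≤ r / 2}

def ball (G : SimpleGraph V) (v : V) (r : ℕ) : G.Subgraph where
  verts := ballVerts G v r
  Adj u u' := G.Adj u u' ∧ u ∈ ballVerts G v r ∧ u' ∈ ballVerts G v r ∧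
    (Even r → ¬(G.dist v u = r / 2 ∧ G.dist v u' = r / 2))
  adj_sub h := h.1
  edge_vert h := h.2.1
  symm := ⟨fun u u' h => ⟨h.1.symm, h.2.2.1, h.2.1, fun he hc => h.2.2.2 he ⟨hc.2, hc.1⟩⟩⟩

/-- `v` is an `r`-local cutvertex if the punctured ball `B_{r/2}(v) - v` is disconnected. -/
def IsLocalCutvertex (G : SimpleGraph V) (r : ℕ) (v : V) : Prop :=
  ¬ ((ball G v r).deleteVerts {v}).coe.Connected

def HasShortCycle (G : SimpleGraph V) (r : ℕ) : Prop :=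
  ∃ (u : V) (c : G.Walk u u), c.IsCycle ∧ c.length ≤ r

/-- A connected graph is `r`-locally 2-connected if it has no `r`-local cutvertex
and contains a cycle of length at most `r`. -/
def LocallyTwoConnected (G : SimpleGraph V) (r : ℕ) : Prop :=
  G.Connected ∧ (∀ v : V, ¬ IsLocalCutvertex G r v) ∧ HasShortCycle G r

/-- The core of `(a₁, a₂)`: all vertices on shortest `a₁`–`a₂` paths. -/
def core (G : SimpleGraph V) (a₁ a₂ : V) : Set V :=
  {x | ∃ p : G.Walk a₁ a₂, p.IsPath ∧ p.length = G.dist a₁ a₂ ∧ x ∈ p.support}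

/-- A walk is contained in a subgraph. -/
def WalkIn {G : SimpleGraph V} (B : G.Subgraph) {x y : V} (p : G.Walk x y) : Prop :=
  p.toSubgraph ≤ B

/-- The label of a vertex `u` in a ball `B`: the set of (supports of) shortest paths
from the core `C` to `u` contained in `B`. -/
def labelIn (G : SimpleGraph V) (B : G.Subgraph) (C : Set V) (u : V) : Set (List V) :=
  {l | ∃ c ∈ C, ∃ p : G.Walk c u, p.IsPath ∧ WalkIn B p ∧
    (∀ c' ∈ C, ∀ q : G.Walk c' u, q.IsPath → WalkIn B q → p.length ≤ q.length) ∧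
    l = p.support}

/-- A potential vertex of the explorer-neighbourhood: a vertex together with a label. -/
abbrev EVert (V : Type u) : Type u := V × Set (List V)

/-- `p` is the copy of the vertex `p.1` in the labelled ball around `a ∈ {a₁, a₂}`. -/
def inCopy (G : SimpleGraph V) (a₁ a₂ : V) (r : ℕ) (a : V) (p : EVert V) : Prop :=
  p.1 ∈ ballVerts G a r ∧ p.2 = labelIn G (ball G a r) (core G a₁ a₂) p.1

/-- Vertices of the explorer-neighbourhood `Expl(a₁,a₂)`. -/
def explVerts (G : SimpleGraph V) (a₁ a₂ : V) (r : ℕ) : Set (EVert V) :=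
  {p | inCopy G a₁ a₂ r a₁ p ∨ inCopy G a₁ a₂ r a₂ p}

/-- The explorer-neighbourhood `Expl(a₁,a₂)`: the union of the two labelled balls,
where two copies of a vertex are identified iff their labels agree. -/
def expl (G : SimpleGraph V) (a₁ a₂ : V) (r : ℕ) : SimpleGraph (EVert V) where
  Adj p q :=
    (inCopy G a₁ a₂ r a₁ p ∧ inCopy G a₁ a₂ r a₁ q ∧ (ball G a₁ r).Adj p.1 q.1) ∨
    (inCopy G a₁ a₂ r a₂ p ∧ inCopy G a₁ a₂ r a₂ q ∧ (ball G a₂ r).Adj p.1 q.1)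
  symm := by
    refine ⟨?_⟩
    intro p q h
    rcases h with ⟨h1, h2, h3⟩ | ⟨h1, h2, h3⟩
    · exact Or.inl ⟨h2, h1, h3.symm⟩
    · exact Or.inr ⟨h2, h1, h3.symm⟩
  loopless := by
    refine ⟨?_⟩
    intro p h
    rcases h with ⟨-, -, h⟩ | ⟨-, -, h⟩ <;> exact G.loopless.irrefl _ h.adj_sub

/-- Vertices of the punctured explorer-neighbourhood `Expl(a₁,a₂) - a₁ - a₂`. -/
def pexplVerts (G : SimpleGraph V) (a₁ a₂ : V) (r : ℕ) : Set (EVert V) :=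
  {p | p ∈ explVerts G a₁ a₂ r ∧ p.1 ≠ a₁ ∧ p.1 ≠ a₂}

/-- The punctured explorer-neighbourhood `Expl(a₁,a₂) - a₁ - a₂`. -/
def pexpl (G : SimpleGraph V) (a₁ a₂ : V) (r : ℕ) :
    SimpleGraph (pexplVerts G a₁ a₂ r) :=
  SimpleGraph.induce (pexplVerts G a₁ a₂ r) (expl G a₁ a₂ r)

/-- `{v,w}` is an `r`-local 2-separator: `v,w` have distance at most `r/2` and the
punctured explorer-neighbourhood is disconnected. -/
def IsLocalTwoSep (G : SimpleGraph V) (r : ℕ) (v w : V) : Prop :=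
  v ≠ w ∧ G.Reachable v w ∧ 2 * G.dist v w ≤ r ∧ ¬ (pexpl G v w r).Connected

/-- The pair `(p,q)` of vertices of `Expl(b₁,b₂)` crosses the local 2-separator `{b₁,b₂}`:
they lie in different components of the punctured explorer-neighbourhood and there is a cycle
of length at most `r` through them containing a copy of `b₁` or `b₂`. -/
def CrossesPair (G : SimpleGraph V) (r : ℕ) (b₁ b₂ : V) (p q : EVert V) : Prop :=
  ∃ (hp : p ∈ pexplVerts G b₁ b₂ r) (hq : q ∈ pexplVerts G b₁ b₂ r),
    ¬ (pexpl G b₁ b₂ r).Reachable ⟨p, hp⟩ ⟨q, hq⟩ ∧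
    ∃ (u : EVert V) (c : (expl G b₁ b₂ r).Walk u u), c.IsCycle ∧ c.length ≤ r ∧
      p ∈ c.support ∧ q ∈ c.support ∧ ∃ z ∈ c.support, z.1 = b₁ ∨ z.1 = b₂

/-- `{a₁,a₂}` crosses `{b₁,b₂}`: some copies of `a₁`, `a₂` cross `{b₁,b₂}`. -/
def Crosses (G : SimpleGraph V) (r : ℕ) (a₁ a₂ b₁ b₂ : V) : Prop :=
  ∃ p q : EVert V, p.1 = a₁ ∧ q.1 = a₂ ∧ CrossesPair G r b₁ b₂ p q

/-- Some copy of `x` lies in the same component of `Expl(v,w) - v - w` as some copy of `y`. -/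
def CopyReach (G : SimpleGraph V) (r : ℕ) (v w x y : V) : Prop :=
  ∃ (p q : EVert V) (hp : p ∈ pexplVerts G v w r) (hq : q ∈ pexplVerts G v w r),
    p.1 = x ∧ q.1 = y ∧ (pexpl G v w r).Reachable ⟨p, hp⟩ ⟨q, hq⟩

/-- A cycle through `a₁` alternating between `{a₁,a₂}` and `{b₁,b₂}`: the four vertices are
distinct and `b₁`, `b₂` lie on different arcs of the cycle between `a₁` and `a₂`. -/
def AltCycle (G : SimpleGraph V) (a₁ a₂ b₁ b₂ : V) (c : G.Walk a₁ a₁) : Prop :=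
  c.IsCycle ∧ b₁ ≠ b₂ ∧ b₁ ∉ ({a₁, a₂} : Set V) ∧ b₂ ∉ ({a₁, a₂} : Set V) ∧
  ∃ (p : G.Walk a₁ a₂) (q : G.Walk a₂ a₁), c = p.append q ∧
    ((b₁ ∈ p.support ∧ b₂ ∈ q.support) ∨ (b₂ ∈ p.support ∧ b₁ ∈ q.support))

/-- `S` is generated over `𝔽₂` by members of `C` (sum = symmetric difference). -/
def GeneratedBy {α : Type*} (C : Set (Set (Sym2 α))) (S : Set (Sym2 α)) : Prop :=
  ∃ l : List (Set (Sym2 α)), (∀ A ∈ l, A ∈ C) ∧ l.foldr symmDiff ∅ = S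

/-- The edge set of a walk. -/
def walkEdgeSet {α : Type*} {H : SimpleGraph α} {x y : α} (c : H.Walk x y) : Set (Sym2 α) :=
  {e | e ∈ c.edges}


end LocalSep

namespace SimpleGraph

variable {V : Type*} {G : SimpleGraph V}

theorem dist_le_length_div_two_of_mem_support {v u : V} (c : G.Walk v v) (hu : u ∈ c.support) :
    G.dist v u ≤ c.length / 2 := by
  classical
  have htake : G.dist v u ≤ (c.takeUntil u hu).length := dist_le _
  have hdrop : G.dist v u ≤ (c.dropUntil u hu).length := dist_comm ▸ dist_le _
  have hsplit := congr_arg Walk.length (c.take_spec hu)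
  rw [Walk.length_append] at hsplit
  omega

/-- Otherwise two shortest paths and the edge close up to a walk of odd length. -/
theorem IsBipartite.dist_ne_of_adj (hG : G.IsBipartite) {v x y : V} (hx : G.Reachable v x)
    (hxy : G.Adj x y) : G.dist v x ≠ G.dist v y := by
  intro hdist
  obtain ⟨p, hp⟩ := hx.exists_walk_length_eq_dist
  obtain ⟨q, hq⟩ := (hx.trans hxy.reachable).exists_walk_length_eq_dist
  have heven := two_colorable_iff_forall_loop_even.mp hG v ((p.concat hxy).append q.reverse)
  rw [Walk.length_append, Walk.length_concat, Walk.length_reverse, hp, hq, ← hdist] at heven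
  exact Nat.not_even_iff_odd.mpr ⟨G.dist v x, by ring⟩ heven

theorem IsCycles.mem_support_of_adj (hG : G.IsCycles) {u x y : V} {d : G.Walk u u}
    (hd : d.IsCycle) (hx : x ∈ d.support) (hxy : G.Adj x y) : y ∈ d.support := by
  have htwo := hd.ncard_neighborSet_toSubgraph_eq_two hx
  have hnbr : d.toSubgraph.neighborSet x = G.neighborSet x :=
    Set.eq_of_subset_of_ncard_le (d.toSubgraph.neighborSet_subset x)
      (by rw [htwo, hG ⟨y, hxy⟩])
      (Set.finite_of_ncard_ne_zero (by rw [hG ⟨y, hxy⟩]; omega))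
  rw [← mem_neighborSet, ← hnbr] at hxy
  exact Walk.mem_support_of_adj_toSubgraph (d.toSubgraph.adj_symm hxy)

theorem IsCycles.mem_support_of_preconnected (hG : G.IsCycles) (hconn : G.Preconnected)
    {u : V} {d : G.Walk u u} (hd : d.IsCycle) (y : V) : y ∈ d.support := by
  by_contra hy
  obtain ⟨e, -, hfst, hsnd⟩ := (hconn u y).some.exists_boundary_dart {x | x ∈ d.support}
    d.start_mem_support hy
  exact hsnd (hG.mem_support_of_adj hd hfst e.adj)

theorem preconnected_of_forall_mem_support {u w : V} (p : G.Walk u w)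
    (hsupp : ∀ x, x ∈ p.support) : G.Preconnected := by
  classical
  exact fun x y => ⟨(p.takeUntil x (hsupp x)).reverse.append (p.takeUntil y (hsupp y))⟩

namespace Walk

theorem IsCycle.isCycles_of_forall_mem_edges {u : V} {c : G.Walk u u} (hc : c.IsCycle)
    (hedge : ∀ e ∈ G.edgeSet, e ∈ c.edges) : G.IsCycles := by
  have hG : c.toSubgraph.spanningCoe = G := by
    ext x y
    rw [Subgraph.spanningCoe_adj, adj_toSubgraph_iff_mem_edges]
    exact ⟨fun h => c.edges_subset_edgeSet h, fun h => hedge _ h⟩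
  exact hG ▸ hc.isCycles_spanningCoe_toSubgraph

theorem IsCycle.length_le_of_support_subset {u v : V} {c : G.Walk v v} {d : G.Walk u u}
    (hc : c.IsCycle) (hd : d.IsCycle) (hsub : c.support ⊆ d.support) : c.length ≤ d.length := by
  have htail : c.support.tail ⊆ d.support.tail := fun x hx => by
    have hx' := hsub (List.mem_of_mem_tail hx)
    rw [← cons_tail_support] at hx'
    rcases List.mem_cons.mp hx' with rfl | h
    · exact d.end_mem_tail_support hd.not_nil
    · exact h
  simpa using (List.subperm_of_subset hc.support_nodup htail).length_le

theorem IsCycle.even_iff_of_getVert_eq {u : V} {c : G.Walk u u} (hc : c.IsCycle)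
    (heven : Even c.length) {i j : ℕ} (hi : i ≤ c.length) (hj : j ≤ c.length)
    (h : c.getVert i = c.getVert j) : Even i ↔ Even j := by
  rcases Nat.eq_zero_or_pos i with rfl | hi0
  · rw [getVert_zero, eq_comm, hc.getVert_endpoint_iff hj] at h
    rcases h with rfl | rfl <;> simp [heven]
  rcases Nat.eq_zero_or_pos j with rfl | hj0
  · rw [getVert_zero, hc.getVert_endpoint_iff hi] at h
    rcases h with rfl | rfl <;> simp [heven]
  · rw [hc.getVert_injOn ⟨hi0, hi⟩ ⟨hj0, hj⟩ h]

/-- A vertex of an even cycle is coloured by the parity of its position, which is well defined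
because the two positions `0` and `c.length` of the base point have the same parity. -/
theorem IsCycle.isBipartite_of_forall_mem_edges {u : V} {c : G.Walk u u} (hc : c.IsCycle)
    (heven : Even c.length) (hedge : ∀ e ∈ G.edgeSet, e ∈ c.edges) : G.IsBipartite := by
  classical
  let color : V → Bool := fun x => decide (∃ i ≤ c.length, c.getVert i = x ∧ Even i)
  have hcolor : ∀ k ≤ c.length, color (c.getVert k) = decide (Even k) := by
    intro k hk
    simp only [color, decide_eq_decide]
    exact ⟨fun ⟨i, hi, h, hev⟩ => (hc.even_iff_of_getVert_eq heven hi hk h).mp hev,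
      fun hev => ⟨k, hk, rfl, hev⟩⟩
  have hvalid : ∀ k < c.length, color (c.getVert k) ≠ color (c.getVert (k + 1)) := by
    intro k hk
    rw [hcolor k hk.le, hcolor (k + 1) hk, ne_eq, decide_eq_decide, Nat.even_add_one]
    tauto
  have hproper : ∀ {x y : V}, G.Adj x y → color x ≠ color y := fun {x y} hxy => by
    obtain ⟨k, hk, hxy'⟩ := (mk_mem_edges_iff_exists c).mp (hedge _ hxy)
    rcases Sym2.eq_iff.mp hxy' with ⟨rfl, rfl⟩ | ⟨rfl, rfl⟩
    · exact hvalid k hk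
    · exact (hvalid k hk).symm
  simpa using (Coloring.mk color hproper).colorable

end Walk

end SimpleGraph

namespace LocalSep

theorem eq_empty_of_generatedBy_empty {α : Type*} {S : Set (Sym2 α)}
    (h : GeneratedBy ∅ S) : S = ∅ := by
  obtain ⟨l, hl, rfl⟩ := h
  obtain rfl : l = [] := List.eq_nil_iff_forall_not_mem.mpr hl
  rfl

theorem ball_eq_top_of_isCycle {V : Type*} {G : SimpleGraph V} {u : V} {c : G.Walk u u}
    (hc : c.IsCycle) (hsupp : ∀ x, x ∈ c.support) (hedge : ∀ e ∈ G.edgeSet, e ∈ c.edges)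
    (v : V) :    ball G v c.length = ⊤ := by
  classical
  have hconn := preconnected_of_forall_mem_support c hsupp
  have hverts : ∀ x, x ∈ ballVerts G v c.length := fun x =>
    ⟨hconn v x, by
      simpa using dist_le_length_div_two_of_mem_support (c.rotate v (hsupp v))
        ((c.mem_support_rotate_iff v _).mpr (hsupp x))⟩
  refine Subgraph.ext (Set.eq_univ_of_forall hverts) ?_
  ext x y
  refine ⟨And.left, fun hxy => ⟨hxy, hverts x, hverts y, fun heven hhalf => ?_⟩⟩
  exact (hc.isBipartite_of_forall_mem_edges heven hedge).dist_ne_of_adj (hconn v x) hxy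
    (hhalf.1.trans hhalf.2.symm)

/-- Sharpness of the cycle-generation lemma: if `G` is a cycle of length `r` (witnessed by a
spanning cycle `c` of length `r` using all edges), then `G` equals the ball `B_{r/2}(v)` for
every vertex `v`, and the cycle `c` is not generated by cycles of length at most `r - 1`. -/
theorem stmt4 {V : Type u} (G : SimpleGraph V) (r : ℕ) {v₀ : V} (c : G.Walk v₀ v₀)
    (hc : c.IsCycle) (hlen : c.length = r)
    (hsupp : ∀ u : V, u ∈ c.support) (hedge : ∀ e ∈ G.edgeSet, e ∈ c.edges) :
    (∀ v : V, ball G v r = (⊤ : G.Subgraph)) ∧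
    ¬ GeneratedBy
        {S | ∃ (u : V) (d : G.Walk u u), d.IsCycle ∧ d.length ≤ r - 1 ∧ S = walkEdgeSet d}
        (walkEdgeSet c) := by
  subst hlen
  refine ⟨ball_eq_top_of_isCycle hc hsupp hedge, fun hgen => ?_⟩
  have hcycles := hc.isCycles_of_forall_mem_edges hedge
  have hconn := preconnected_of_forall_mem_support c hsupp
  have hno_short : {S | ∃ (u : V) (d : G.Walk u u), d.IsCycle ∧ d.length ≤ c.length - 1 ∧
      S = walkEdgeSet d} = ∅ := by
    refine Set.eq_empty_of_forall_notMem ?_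
    rintro _ ⟨u, d, hd, hdlen, -⟩
    have hle := hc.length_le_of_support_subset hd
      fun x _ => hcycles.mem_support_of_preconnected hconn hd x
    have hc3 := hc.three_le_length
    omega
  rw [hno_short] at hgen
  obtain ⟨e, he⟩ := List.exists_mem_of_ne_nil c.edges (Walk.edges_eq_nil.not.mpr hc.not_nil)
  exact (eq_empty_of_generatedBy_empty hgen).subset (show e ∈ walkEdgeSet c from he)

end LocalSep
end

section
/- If an r-local 2-separator {a₁,a₂} of a graph G crosses an r-local 2-separator {b₁,b₂}, then there is a cycle of G of length at most r that alternates between {a₁,a₂} and {b₁,b₂}, i.e., the cyclic order in which the four vertices appear on the cycle is a₁ b₁ a₂ b₂ or a₁ b₂ a₂ b₁. Moreover, any cycle of G of length at most r through a₁ and a₂ containing b₁ or b₂ alternates between the two local 2-separators. -/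
open SimpleGraph

universe u

namespace LocalSep

variable {V : Type u}

/-! Near `b₁` and `b₂`, namely at vertices `u` with `d(b₁,u) + d(b₂,u) + d(b₁,b₂) ≤ r`, the labels
computed in the balls around `b₁` and around `b₂` agree, so such a vertex has a single copy in
`Expl(b₁,b₂)`; and a walk of `G` inside one of the two balls lifts to `Expl(b₁,b₂)`.

Both arcs of the crossing cycle between the separated copies of `a₁` and `a₂` meet a copy of `b₁`
or `b₂`. Copies of `b₁` and `b₂` being unique, the cycle passes through both, so all of its
vertices are near `b₁` and `b₂` and it projects injectively onto a short cycle of `G` through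
`a₁`, `a₂` and `b₁`. Conversely, on a short cycle of `G` through `a₁`, `a₂` and `b ∈ {b₁, b₂}`,
an arc between `a₁` and `a₂` avoiding `b₁` and `b₂` would lie in the ball around `b` and lift to
a walk joining the separated copies. So each arc contains `b₁` or `b₂`, and different ones as the
arcs share only `a₁` and `a₂`. -/

section Walks

variable {G : SimpleGraph V}

lemma _root_.SimpleGraph.Walk.dist_le_dist_add_length (b : V) {x y : V} (P : G.Walk x y) :
    G.dist b x ≤ G.dist b y + P.length := by
  have htri := P.reverse.reachable.dist_triangle_right b
  have hP := dist_le P.reverse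
  rw [Walk.length_reverse] at hP
  omega

lemma _root_.SimpleGraph.Walk.dist_add_dist_le_length [DecidableEq V] {x y z : V}
    (P : G.Walk x y) (hz : z ∈ P.support) : G.dist x z + G.dist z y ≤ P.length := by
  rw [← P.take_spec hz, Walk.length_append]
  exact add_le_add (dist_le _) (dist_le _)

lemma _root_.SimpleGraph.Walk.dist_add_dist_add_dist_le_length [DecidableEq V] {u x y z : V}
    (c : G.Walk u u) (hx : x ∈ c.support) (hy : y ∈ c.support) (hz : z ∈ c.support) :
    G.dist x y + G.dist y z + G.dist z x ≤ c.length := by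
  rw [← c.length_rotate x hx]
  set d := c.rotate x hx
  have hy' : y ∈ d.support := (c.mem_support_rotate_iff x hx).2 hy
  have hz' : z ∈ d.support := (c.mem_support_rotate_iff x hx).2 hz
  rw [← d.take_spec hy', Walk.length_append]
  rw [← d.take_spec hy', Walk.mem_support_append_iff] at hz'
  rcases hz' with hz' | hz'
  · have h₁ := (d.takeUntil y hy').dist_add_dist_le_length hz'
    have h₂ := dist_le (d.dropUntil y hy')
    rw [dist_comm (u := x) (v := z), dist_comm (u := z) (v := y)] at h₁
    rw [dist_comm (u := y) (v := x)] at h₂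
    omega
  · have h₁ := dist_le (d.takeUntil y hy')
    have h₂ := (d.dropUntil y hy').dist_add_dist_le_length hz'
    omega

lemma _root_.SimpleGraph.Walk.IsCycle.eq_or_eq_of_mem_takeUntil_of_mem_dropUntil [DecidableEq V]
    {x y z : V} {c : G.Walk x x} (hc : c.IsCycle) (hy : y ∈ c.support)
    (h₁ : z ∈ (c.takeUntil y hy).support) (h₂ : z ∈ (c.dropUntil y hy).support) :
    z = x ∨ z = y := by
  have hnodup := hc.support_nodup
  rw [← c.take_spec hy, Walk.tail_support_append] at hnodup
  rw [← Walk.cons_tail_support, List.mem_cons] at h₁ h₂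
  by_contra! hne
  exact List.disjoint_of_nodup_append hnodup (h₁.resolve_left hne.1) (h₂.resolve_left hne.2)

lemma _root_.SimpleGraph.Walk.IsCycle.map_of_injOn {W : Type*} {H : SimpleGraph W} {f : G →g H}
    {u : V} {c : G.Walk u u} (hc : c.IsCycle) (hf : Set.InjOn f {v | v ∈ c.support}) :
    (c.map f).IsCycle := by
  have hnil : ¬(c.map f).Nil := by simpa using hc.not_nil
  rw [Walk.isCycle_iff_isPath_tail_and_le_length, Walk.isPath_def,
    Walk.support_tail_of_not_nil _ hnil, Walk.support_map, ← List.map_tail, Walk.length_map]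
  refine ⟨hc.support_nodup.map_on fun v hv w hw h => ?_, hc.three_le_length⟩
  exact hf (List.mem_of_mem_tail hv) (List.mem_of_mem_tail hw) h

end Walks

section Balls

variable {G : SimpleGraph V} {r : ℕ}

lemma walkIn_ball {b x y : V} (P : G.Walk x y) (hx : G.Reachable b x)
    (hP : G.dist b x + G.dist b y + P.length ≤ r) : WalkIn (ball G b r) P := by
  induction P with
  | @nil x =>
    exact (singletonSubgraph_le_iff x (ball G b r)).2 ⟨hx, by simp at hP; omega⟩
  | @cons x w y hxw P ih =>
    have hw : G.Reachable b w := hx.trans hxw.reachable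
    have hxw₁ : G.dist b w ≤ G.dist b x + 1 := by
      simpa using (Walk.cons hxw.symm Walk.nil).dist_le_dist_add_length b
    have hxy := (Walk.cons hxw P).dist_le_dist_add_length b
    have hwy := P.dist_le_dist_add_length b
    rw [Walk.length_cons] at hP hxy
    have hadj : (ball G b r).Adj x w := by
      refine ⟨hxw, ⟨hx, by omega⟩, ⟨hw, by omega⟩, ?_⟩
      rintro ⟨k, rfl⟩ ⟨hx', hw'⟩
      omega
    exact sup_le (subgraphOfAdj_le_of_adj _ hadj) (ih hw (by omega))

lemma left_mem_core {b₁ b₂ : V} (h : G.Reachable b₁ b₂) : b₁ ∈ core G b₁ b₂ := by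
  obtain ⟨p, hp, hlen⟩ := h.exists_path_of_dist
  exact ⟨p, hp, hlen, p.start_mem_support⟩

lemma right_mem_core {b₁ b₂ : V} (h : G.Reachable b₁ b₂) : b₂ ∈ core G b₁ b₂ := by
  obtain ⟨p, hp, hlen⟩ := h.exists_path_of_dist
  exact ⟨p, hp, hlen, p.end_mem_support⟩

lemma reachable_and_dist_add_dist_le_of_mem_core [DecidableEq V] {b₁ b₂ x : V}
    (hx : x ∈ core G b₁ b₂) :
    G.Reachable b₁ x ∧ G.dist b₁ x + G.dist b₂ x ≤ G.dist b₁ b₂ := by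
  obtain ⟨p, -, hlen, hxp⟩ := hx
  refine ⟨⟨p.takeUntil x hxp⟩, ?_⟩
  rw [dist_comm (u := b₂), ← hlen]
  exact p.dist_add_dist_le_length hxp

lemma labelIn_ball_subset {b₁ b₂ u : V} (C : Set V) (hb₁ : b₁ ∈ C) (hb₂ : b₂ ∈ C)
    (hC : ∀ x ∈ C, G.Reachable b₁ x ∧ G.dist b₁ x + G.dist b₂ x ≤ G.dist b₁ b₂)
    (hu : G.Reachable b₁ u) (hperim : G.dist b₁ u + G.dist b₂ u + G.dist b₁ b₂ ≤ r) :
    labelIn G (ball G b₁ r) C u ⊆ labelIn G (ball G b₂ r) C u := by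
  have hbb : G.Reachable b₁ b₂ := (hC b₂ hb₂).1
  have hu₂ : G.Reachable b₂ u := hbb.symm.trans hu
  have htri : G.dist b₁ u ≤ G.dist b₁ b₂ + G.dist b₂ u := hbb.dist_triangle_left u
  obtain ⟨γ₁, hγ₁, hγ₁len⟩ := hu.exists_path_of_dist
  obtain ⟨γ₂, hγ₂, hγ₂len⟩ := hu₂.exists_path_of_dist
  have hγ₁B : WalkIn (ball G b₁ r) γ₁ := walkIn_ball γ₁ .rfl (by simp; omega)
  have hγ₂B : WalkIn (ball G b₁ r) γ₂ := walkIn_ball γ₂ hbb (by omega)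
  -- a labelled path is no longer than the geodesics from `b₁` and `b₂`, so it lies in both balls
  rintro l ⟨c, hc, p, hp, hpB, hmin, rfl⟩
  have hpγ₁ := hmin b₁ hb₁ γ₁ hγ₁ hγ₁B
  have hpγ₂ := hmin b₂ hb₂ γ₂ hγ₂ hγ₂B
  obtain ⟨hc₁, hcd⟩ := hC c hc
  refine ⟨c, hc, p, hp, walkIn_ball p (hbb.symm.trans hc₁) (by omega), ?_, rfl⟩
  intro c' hc' q hq hqB
  by_cases hqlen : G.dist b₂ u ≤ q.length
  · omega
  · obtain ⟨hc'₁, hc'd⟩ := hC c' hc'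
    exact hmin c' hc' q hq (walkIn_ball q hc'₁ (by omega))

lemma labelIn_ball_eq [DecidableEq V] {b₁ b₂ u : V} (hbb : G.Reachable b₁ b₂)
    (hu : G.Reachable b₁ u) (hperim : G.dist b₁ u + G.dist b₂ u + G.dist b₁ b₂ ≤ r) :
    labelIn G (ball G b₁ r) (core G b₁ b₂) u = labelIn G (ball G b₂ r) (core G b₁ b₂) u := by
  have hC := fun x (hx : x ∈ core G b₁ b₂) => reachable_and_dist_add_dist_le_of_mem_core hx
  refine (labelIn_ball_subset _ (left_mem_core hbb) (right_mem_core hbb) hC hu hperim).antisymm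
    (labelIn_ball_subset _ (right_mem_core hbb) (left_mem_core hbb) (fun x hx => ?_)
      (hbb.symm.trans hu) (by rw [dist_comm (u := b₂) (v := b₁)]; omega))
  obtain ⟨hx₁, hxd⟩ := hC x hx
  exact ⟨hbb.symm.trans hx₁, by rw [dist_comm (u := b₂) (v := b₁)]; omega⟩

end Balls

section Explorer

variable {G : SimpleGraph V} {r : ℕ} {b₁ b₂ : V}

def ballCopy (G : SimpleGraph V) (b₁ b₂ : V) (r : ℕ) (b u : V) : EVert V :=
  (u, labelIn G (ball G b r) (core G b₁ b₂) u)

lemma ballCopy_left_eq_right [DecidableEq V] (hbb : G.Reachable b₁ b₂) {u : V}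
    (hu : G.Reachable b₁ u) (hperim : G.dist b₁ u + G.dist b₂ u + G.dist b₁ b₂ ≤ r) :
    ballCopy G b₁ b₂ r b₁ u = ballCopy G b₁ b₂ r b₂ u :=
  Prod.ext rfl (labelIn_ball_eq hbb hu hperim)

lemma eq_ballCopy_of_mem_explVerts [DecidableEq V] (hbb : G.Reachable b₁ b₂) {b : V}
    (hb : b = b₁ ∨ b = b₂) {z : EVert V} (hz : z ∈ explVerts G b₁ b₂ r)
    (hperim : G.dist b₁ z.1 + G.dist b₂ z.1 + G.dist b₁ b₂ ≤ r) :
    z = ballCopy G b₁ b₂ r b z.1 := by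
  have hz₁ : G.Reachable b₁ z.1 := by
    rcases hz with ⟨hmem, -⟩ | ⟨hmem, -⟩
    exacts [hmem.1, hbb.trans hmem.1]
  have hcopies := ballCopy_left_eq_right hbb hz₁ hperim
  rcases hz with ⟨-, hlab⟩ | ⟨-, hlab⟩ <;> rcases hb with rfl | rfl
  · exact Prod.ext rfl hlab
  · rw [← hcopies]
    exact Prod.ext rfl hlab
  · rw [hcopies]
    exact Prod.ext rfl hlab
  · exact Prod.ext rfl hlab

lemma eq_of_fst_eq [DecidableEq V] (hbb : G.Reachable b₁ b₂) {z w : EVert V}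
    (hz : z ∈ explVerts G b₁ b₂ r) (hw : w ∈ explVerts G b₁ b₂ r)
    (hperim : G.dist b₁ z.1 + G.dist b₂ z.1 + G.dist b₁ b₂ ≤ r) (h : z.1 = w.1) : z = w := by
  rw [eq_ballCopy_of_mem_explVerts hbb (.inl rfl) hz hperim,
    eq_ballCopy_of_mem_explVerts hbb (.inl rfl) hw (h ▸ hperim), h]

lemma mem_explVerts_of_adj {z w : EVert V} (h : (expl G b₁ b₂ r).Adj z w) :
    z ∈ explVerts G b₁ b₂ r ∧ w ∈ explVerts G b₁ b₂ r := by
  rcases h with ⟨hz, hw, -⟩ | ⟨hz, hw, -⟩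
  exacts [⟨.inl hz, .inl hw⟩, ⟨.inr hz, .inr hw⟩]

lemma mem_explVerts_of_mem_support {x y z : EVert V} (W : (expl G b₁ b₂ r).Walk x y)
    (hx : x ∈ explVerts G b₁ b₂ r) (hz : z ∈ W.support) : z ∈ explVerts G b₁ b₂ r := by
  rw [← W.cons_map_snd_darts, List.mem_cons, List.mem_map] at hz
  rcases hz with rfl | ⟨d, -, rfl⟩
  exacts [hx, (mem_explVerts_of_adj d.adj).2]

lemma exists_mem_support_fst_eq_of_not_reachable {x y : EVert V}
    (W : (expl G b₁ b₂ r).Walk x y) (hx : x ∈ pexplVerts G b₁ b₂ r)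
    (hy : y ∈ pexplVerts G b₁ b₂ r) (hxy : ¬(pexpl G b₁ b₂ r).Reachable ⟨x, hx⟩ ⟨y, hy⟩) :
    ∃ z ∈ W.support, z.1 = b₁ ∨ z.1 = b₂ := by
  by_contra! hW
  exact hxy (W.induce (pexplVerts G b₁ b₂ r) fun z hz =>
    ⟨mem_explVerts_of_mem_support W hx.1 hz, hW z hz⟩).reachable

def ballCopyHom (G : SimpleGraph V) (b₁ b₂ : V) (r : ℕ) {b : V} (hb : b = b₁ ∨ b = b₂) :
    (ball G b r).spanningCoe →g expl G b₁ b₂ r where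
  toFun := ballCopy G b₁ b₂ r b
  map_rel' {u v} h := by
    rcases hb with rfl | rfl
    exacts [.inl ⟨⟨h.2.1, rfl⟩, ⟨h.2.2.1, rfl⟩, h⟩, .inr ⟨⟨h.2.1, rfl⟩, ⟨h.2.2.1, rfl⟩, h⟩]

lemma mem_support_of_not_reachable_ballCopy {b : V} (hb : b = b₁ ∨ b = b₂) {x y : V}
    (P : G.Walk x y) (hP : WalkIn (ball G b r) P) {p q : EVert V}
    (hp : p ∈ pexplVerts G b₁ b₂ r) (hq : q ∈ pexplVerts G b₁ b₂ r)
    (hpq : ¬(pexpl G b₁ b₂ r).Reachable ⟨p, hp⟩ ⟨q, hq⟩)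
    (hxp : ballCopy G b₁ b₂ r b x = p) (hyq : ballCopy G b₁ b₂ r b y = q) :
    b₁ ∈ P.support ∨ b₂ ∈ P.support := by
  subst hxp hyq
  have hedges : ∀ e ∈ P.edges, e ∈ (ball G b r).spanningCoe.edgeSet := fun e he => by
    rw [Subgraph.edgeSet_spanningCoe]
    exact Subgraph.edgeSet_mono hP ((P.mem_edges_toSubgraph).2 he)
  obtain ⟨z, hz, hzb⟩ := exists_mem_support_fst_eq_of_not_reachable
    ((P.transfer _ hedges).map (ballCopyHom G b₁ b₂ r hb)) hp hq hpq
  rw [Walk.support_map, Walk.support_transfer, List.mem_map] at hz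
  obtain ⟨w, hw, rfl⟩ := hz
  rcases hzb with h | h
  exacts [.inl (h ▸ hw), .inr (h ▸ hw)]

def explProj (G : SimpleGraph V) (b₁ b₂ : V) (r : ℕ) : expl G b₁ b₂ r →g G where
  toFun := Prod.fst
  map_rel' := by rintro p q (⟨-, -, h⟩ | ⟨-, -, h⟩) <;> exact h.adj_sub

lemma fst_mem_support_map_explProj {x y z : EVert V} {W : (expl G b₁ b₂ r).Walk x y}
    (hz : z ∈ W.support) : z.1 ∈ (W.map (explProj G b₁ b₂ r)).support := by
  rw [Walk.support_map]
  exact List.mem_map_of_mem hz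

end Explorer

section Crossing

variable [DecidableEq V] {G : SimpleGraph V} {r : ℕ} {b₁ b₂ : V}

lemma perimeter_le_of_mem_support {u : EVert V} {C : (expl G b₁ b₂ r).Walk u u}
    (hC : C.length ≤ r) {z₁ z₂ z : EVert V} (hz₁ : z₁ ∈ C.support) (hz₂ : z₂ ∈ C.support)
    (h₁ : z₁.1 = b₁) (h₂ : z₂.1 = b₂) (hz : z ∈ C.support) :
    G.dist b₁ z.1 + G.dist b₂ z.1 + G.dist b₁ b₂ ≤ r := by
  have := (C.map (explProj G b₁ b₂ r)).dist_add_dist_add_dist_le_length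
    (h₁ ▸ fst_mem_support_map_explProj hz₁) (h₂ ▸ fst_mem_support_map_explProj hz₂)
    (fst_mem_support_map_explProj hz)
  rw [Walk.length_map, dist_comm (u := z.1) (v := b₁)] at this
  omega

/-- Each of the two arcs of the cycle between the separated vertices `p` and `q` meets a copy of
`b₁` or `b₂`, and these copies differ since `b₁` and `b₂` have only one copy each. -/
lemma exists_mem_support_of_crossing (hbb : G.Reachable b₁ b₂) (hD : 2 * G.dist b₁ b₂ ≤ r)
    {p q : EVert V} (hp : p ∈ pexplVerts G b₁ b₂ r) (hq : q ∈ pexplVerts G b₁ b₂ r)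
    (hpq : ¬(pexpl G b₁ b₂ r).Reachable ⟨p, hp⟩ ⟨q, hq⟩) {u : EVert V}
    {C : (expl G b₁ b₂ r).Walk u u} (hC : C.IsCycle) (hpC : p ∈ C.support)
    (hqC : q ∈ C.support) :
    ∃ z₁ ∈ C.support, ∃ z₂ ∈ C.support, z₁.1 = b₁ ∧ z₂.1 = b₂ := by
  classical
  set D := C.rotate p hpC
  have hqD : q ∈ D.support := (C.mem_support_rotate_iff p hpC).2 hqC
  obtain ⟨za, hzaD, hza⟩ :=
    exists_mem_support_fst_eq_of_not_reachable (D.takeUntil q hqD) hp hq hpq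
  obtain ⟨zb, hzbD, hzb⟩ :=
    exists_mem_support_fst_eq_of_not_reachable (D.dropUntil q hqD) hq hp (fun h => hpq h.symm)
  have hzaC : za ∈ C.support :=
    (C.mem_support_rotate_iff p hpC).1 (D.support_takeUntil_subset_support hqD hzaD)
  have hzbC : zb ∈ C.support :=
    (C.mem_support_rotate_iff p hpC).1 (D.support_dropUntil_subset_support hqD hzbD)
  have hne : za.1 ≠ zb.1 := by
    intro h
    have hperim : G.dist b₁ za.1 + G.dist b₂ za.1 + G.dist b₁ b₂ ≤ r := by
      rcases hza with h' | h' <;> simp [h', dist_comm (u := b₂) (v := b₁)] <;> omega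
    have hzazb : za = zb := eq_of_fst_eq hbb (mem_explVerts_of_mem_support _ hp.1 hzaD)
      (mem_explVerts_of_mem_support _ hq.1 hzbD) hperim h
    subst hzazb
    have hpqb : za = p ∨ za = q :=
      (hC.rotate hpC).eq_or_eq_of_mem_takeUntil_of_mem_dropUntil hqD hzaD hzbD
    rcases hpqb with rfl | rfl <;> rcases hza with h' | h'
    exacts [hp.2.1 h', hp.2.2 h', hq.2.1 h', hq.2.2 h']
  rcases hza with ha | ha <;> rcases hzb with hb | hb
  · exact absurd (ha.trans hb.symm) hne
  · exact ⟨za, hzaC, zb, hzbC, ha, hb⟩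
  · exact ⟨zb, hzbC, za, hzaC, hb, ha⟩
  · exact absurd (ha.trans hb.symm) hne

/-- If `b` lies on `Q`, the short cycle `P ++ Q` puts `P` inside the ball around `b`, where it
would lift to a walk joining the separated copies. -/
lemma mem_arc_of_not_reachable (hbb : G.Reachable b₁ b₂) {b : V} (hb : b = b₁ ∨ b = b₂)
    {x y : V} (P : G.Walk x y) (Q : G.Walk y x) (hlen : P.length + Q.length ≤ r)
    (hbPQ : b ∈ P.support ∨ b ∈ Q.support) {p q : EVert V}
    (hp : p ∈ pexplVerts G b₁ b₂ r) (hq : q ∈ pexplVerts G b₁ b₂ r)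
    (hpq : ¬(pexpl G b₁ b₂ r).Reachable ⟨p, hp⟩ ⟨q, hq⟩) (hpx : p.1 = x) (hqy : q.1 = y)
    (hx : G.dist b₁ x + G.dist b₂ x + G.dist b₁ b₂ ≤ r)
    (hy : G.dist b₁ y + G.dist b₂ y + G.dist b₁ b₂ ≤ r) :
    b₁ ∈ P.support ∨ b₂ ∈ P.support := by
  subst hpx hqy
  rcases hbPQ with hbP | hbQ
  · rcases hb with rfl | rfl
    exacts [.inl hbP, .inr hbP]
  have hQ := Q.dist_add_dist_le_length hbQ
  rw [dist_comm (u := q.1)] at hQ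
  have hP : WalkIn (ball G b r) P := walkIn_ball P ⟨Q.dropUntil b hbQ⟩ (by omega)
  exact mem_support_of_not_reachable_ballCopy hb P hP hp hq hpq
    (eq_ballCopy_of_mem_explVerts hbb hb hp.1 hx).symm
    (eq_ballCopy_of_mem_explVerts hbb hb hq.1 hy).symm

lemma altCycle_rotate_of_not_reachable (hbne : b₁ ≠ b₂) (hbb : G.Reachable b₁ b₂)
    {a₁ a₂ : V} {p q : EVert V} (hp : p ∈ pexplVerts G b₁ b₂ r) (hq : q ∈ pexplVerts G b₁ b₂ r)
    (hpq : ¬(pexpl G b₁ b₂ r).Reachable ⟨p, hp⟩ ⟨q, hq⟩) (hpa : p.1 = a₁) (hqa : q.1 = a₂)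
    (ha₁ : G.dist b₁ a₁ + G.dist b₂ a₁ + G.dist b₁ b₂ ≤ r)
    (ha₂ : G.dist b₁ a₂ + G.dist b₂ a₂ + G.dist b₁ b₂ ≤ r)
    (u : V) (c : G.Walk u u) (hc : c.IsCycle) (hlen : c.length ≤ r) (h₁ : a₁ ∈ c.support)
    (h₂ : a₂ ∈ c.support) (hb : b₁ ∈ c.support ∨ b₂ ∈ c.support) :
    AltCycle G a₁ a₂ b₁ b₂ (c.rotate a₁ h₁) := by
  set d := c.rotate a₁ h₁
  have h₂' : a₂ ∈ d.support := (c.mem_support_rotate_iff a₁ h₁).2 h₂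
  set P := d.takeUntil a₂ h₂'
  set Q := d.dropUntil a₂ h₂'
  have hdPQ : d = P.append Q := (d.take_spec h₂').symm
  have hPQ : P.length + Q.length ≤ r := by
    rw [← Walk.length_append, ← hdPQ, Walk.length_rotate]
    exact hlen
  obtain ⟨b, hb', hbPQ⟩ : ∃ b, (b = b₁ ∨ b = b₂) ∧ (b ∈ P.support ∨ b ∈ Q.support) := by
    simp only [← Walk.mem_support_append_iff, ← hdPQ, d, Walk.mem_support_rotate_iff]
    rcases hb with hb | hb
    exacts [⟨b₁, .inl rfl, hb⟩, ⟨b₂, .inr rfl, hb⟩]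
  have hP := mem_arc_of_not_reachable hbb hb' P Q hPQ hbPQ hp hq hpq hpa hqa ha₁ ha₂
  have hQ := mem_arc_of_not_reachable hbb hb' Q P (by omega) hbPQ.symm hq hp
    (fun h => hpq h.symm) hqa hpa ha₂ ha₁
  have hb₁ : b₁ ≠ a₁ ∧ b₁ ≠ a₂ :=
    ⟨fun h => hp.2.1 (hpa.trans h.symm), fun h => hq.2.1 (hqa.trans h.symm)⟩
  have hb₂ : b₂ ≠ a₁ ∧ b₂ ≠ a₂ :=
    ⟨fun h => hp.2.2 (hpa.trans h.symm), fun h => hq.2.2 (hqa.trans h.symm)⟩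
  have hboth : ∀ z ∈ P.support, z ∈ Q.support → z = a₁ ∨ z = a₂ := fun z hzP hzQ =>
    (hc.rotate h₁).eq_or_eq_of_mem_takeUntil_of_mem_dropUntil h₂' hzP hzQ
  refine ⟨hc.rotate h₁, hbne, by simp [hb₁.1, hb₁.2], by simp [hb₂.1, hb₂.2], P, Q, hdPQ, ?_⟩
  rcases hP with hP | hP <;> rcases hQ with hQ | hQ
  · exact absurd (hboth b₁ hP hQ) (by tauto)
  · exact .inl ⟨hP, hQ⟩
  · exact .inr ⟨hP, hQ⟩
  · exact absurd (hboth b₂ hP hQ) (by tauto)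

end Crossing

theorem stmt10_general {V : Type u} [DecidableEq V] (G : SimpleGraph V) (r : ℕ) (a₁ a₂ b₁ b₂ : V)
    (hB : IsLocalTwoSep G r b₁ b₂)
    (hX : Crosses G r a₁ a₂ b₁ b₂) :
    (∃ c : G.Walk a₁ a₁, AltCycle G a₁ a₂ b₁ b₂ c ∧ c.length ≤ r) ∧
    (∀ (u : V) (c : G.Walk u u), c.IsCycle → c.length ≤ r →
      ∀ h₁ : a₁ ∈ c.support, a₂ ∈ c.support → (b₁ ∈ c.support ∨ b₂ ∈ c.support) →
        AltCycle G a₁ a₂ b₁ b₂ (c.rotate a₁ h₁)) := by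
  obtain ⟨hbne, hbb, hD, -⟩ := hB
  obtain ⟨p, q, hpa, hqa, hp, hq, hpq, u, C, hC, hCr, hpC, hqC, -⟩ := hX
  obtain ⟨z₁, hz₁, z₂, hz₂, h₁, h₂⟩ := exists_mem_support_of_crossing hbb hD hp hq hpq hC hpC hqC
  have hperim := fun z (hz : z ∈ C.support) => perimeter_le_of_mem_support hCr hz₁ hz₂ h₁ h₂ hz
  have halt := altCycle_rotate_of_not_reachable hbne hbb hp hq hpq hpa hqa
    (hpa ▸ hperim p hpC) (hqa ▸ hperim q hqC)
  refine ⟨?_, halt⟩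
  have hCexpl : ∀ z ∈ C.support, z ∈ explVerts G b₁ b₂ r :=
    fun z => mem_explVerts_of_mem_support C (mem_explVerts_of_adj (C.adj_snd hC.not_nil)).1
  have hc : (C.map (explProj G b₁ b₂ r)).IsCycle := hC.map_of_injOn fun z hz w hw h =>
    eq_of_fst_eq hbb (hCexpl z hz) (hCexpl w hw) (hperim z hz) h
  refine ⟨_, halt _ _ hc (by simpa using hCr) (hpa ▸ fst_mem_support_map_explProj hpC)
    (hqa ▸ fst_mem_support_map_explProj hqC) (.inl (h₁ ▸ fst_mem_support_map_explProj hz₁)),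
    by simpa using hCr⟩

/-- Alternating Cycle Lemma: if an `r`-local 2-separator `{a₁,a₂}` crosses an `r`-local
2-separator `{b₁,b₂}`, then there is a cycle of `G` of length at most `r` alternating between
them; moreover, any cycle of `G` of length at most `r` through `a₁` and `a₂` containing `b₁`
or `b₂` alternates between the two local 2-separators. -/
theorem stmt10 {V : Type u} [DecidableEq V] (G : SimpleGraph V) (r : ℕ) (a₁ a₂ b₁ b₂ : V)
    (hA : IsLocalTwoSep G r a₁ a₂) (hB : IsLocalTwoSep G r b₁ b₂)
    (hX : Crosses G r a₁ a₂ b₁ b₂) :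
    (∃ c : G.Walk a₁ a₁, AltCycle G a₁ a₂ b₁ b₂ c ∧ c.length ≤ r) ∧
    (∀ (u : V) (c : G.Walk u u), c.IsCycle → c.length ≤ r →
      ∀ h₁ : a₁ ∈ c.support, a₂ ∈ c.support → (b₁ ∈ c.support ∨ b₂ ∈ c.support) →
        AltCycle G a₁ a₂ b₁ b₂ (c.rotate a₁ h₁)) :=
  stmt10_general G r a₁ a₂ b₁ b₂ hB hX

end LocalSep
end

section
/- Let G' be obtained from a graph G by r-locally cutting a vertex v, and let w be another vertex. Two neighbours x and y of w lie in the same connected component of B_{r/2}(w) - w (computed in G) if and only if they lie in the same connected component of B'_{r/2}(w) - w (computed in G'). -/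
open SimpleGraph

universe u

namespace LocalSep

variable {V : Type u}

/-- The punctured ball `B_{r/2}(v) - v` as a simple graph. -/
def pBallG {V : Type u} (G : SimpleGraph V) (r : ℕ) (v : V) :=
  ((ball G v r).deleteVerts {v}).coe

/-- The set of components of the punctured ball `B_{r/2}(v) - v`. -/
abbrev VComp {V : Type u} (G : SimpleGraph V) (r : ℕ) (v : V) :=
  (pBallG G r v).ConnectedComponent

/-- The vertices of the graph obtained from `G` by `r`-locally cutting the vertex `v`:
the vertices other than `v`, together with one slice of `v` for each component of the
punctured ball `B_{r/2}(v) - v`. -/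
def VCutVert {V : Type u} (G : SimpleGraph V) (r : ℕ) (v : V) :=
  {u : V // u ≠ v} ⊕ VComp G r v

/-- One-sided adjacency of the graph obtained by `r`-locally cutting the vertex `v`:
the slice for a component `c` inherits exactly the edges of `v` whose other endvertex lies
in `c`. -/
def vcutAux {V : Type u} (G : SimpleGraph V) (r : ℕ) (v : V) :
    VCutVert G r v → VCutVert G r v → Prop
  | Sum.inl u, Sum.inl u' => G.Adj u.1 u'.1
  | Sum.inl u, Sum.inr c => G.Adj v u.1 ∧
      ∃ h : u.1 ∈ ((ball G v r).deleteVerts {v}).verts,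
        (pBallG G r v).connectedComponentMk ⟨u.1, h⟩ = c
  | _, _ => False

/-- The graph obtained from `G` by `r`-locally cutting the vertex `v`. -/
def vertexCut {V : Type u} (G : SimpleGraph V) (r : ℕ) (v : V) :
    SimpleGraph (VCutVert G r v) where
  Adj x y := vcutAux G r v x y ∨ vcutAux G r v y x
  symm := ⟨fun x y h => h.symm⟩
  loopless := by
    refine ⟨?_⟩
    intro x h
    have h' : vcutAux G r v x x := h.elim id id
    rcases x with u | c
    · exact G.loopless.irrefl _ h'
    · exact h'.elim

/-- `x'` is the copy in the cut graph of the neighbour `x` of `w`: either `x ≠ v` and `x'` is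
the corresponding ordinary vertex, or `x = v` and `x'` is the unique slice of `v` adjacent to
`w`. -/
def IsCopyNear {V : Type u} (G : SimpleGraph V) (r : ℕ) (v w : V) (hwv : w ≠ v)
    (x : V) (x' : VCutVert G r v) : Prop :=
  (∃ h : x ≠ v, x' = Sum.inl ⟨x, h⟩) ∨
    (x = v ∧ (∃ c, x' = Sum.inr c) ∧ (vertexCut G r v).Adj x' (Sum.inl ⟨w, hwv⟩))

/-!
The projection `G' → G` sending every slice to `v` is a graph homomorphism that does not
increase distances and sends only `w` to `w`, so it maps `B'_{r/2}(w) - w` into `B_{r/2}(w) - w`.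

Conversely, represent `v` by the slice containing `w`. An edge `uv` lies in the ball around `w`
iff `d(w,u) + d(w,v) < r`, and if `u` is joined to `w` inside `B_{r/2}(w) - v` then the triangle
`v, w, u` has perimeter at most `r`; such a `u` is joined to `w` inside `B_{r/2}(v) - v`, i.e.
its edge to `v` survives in `G'` as an edge to that slice. Hence distances from `w` are
preserved for all such vertices, and a path from `x` to `y` in `B_{r/2}(w) - w`, split at `v`,
lifts to `B'_{r/2}(w) - w`.
-/

section General

variable {W : Type*} {G : SimpleGraph V}

lemma dist_map_le {G' : SimpleGraph W} (f : G →g G') {a b : V} (h : G.Reachable a b) :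
    G'.dist (f a) (f b) ≤ G.dist a b := by
  obtain ⟨p, hp⟩ := h.exists_walk_length_eq_dist
  rw [← hp, ← p.length_map f]
  exact dist_le _

lemma exists_adj_dist_add_one {a z : V} (hz : G.Reachable a z) (hne : a ≠ z) :
    ∃ y, G.Adj y z ∧ G.dist a y + 1 = G.dist a z := by
  obtain ⟨p, hp⟩ := hz.symm.exists_walk_length_eq_dist
  obtain ⟨y, h, q, rfl⟩ := Walk.exists_eq_cons_of_ne hne.symm p
  have hq := dist_le q
  have htri := h.reachable.dist_triangle_left a
  rw [Walk.length_cons] at hp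
  rw [dist_eq_one_iff_adj.mpr h] at htri
  refine ⟨y, h.symm, ?_⟩
  rw [dist_comm (u := a), dist_comm (u := a)]
  omega

lemma induction_on_dist {a : V} {P : V → Prop} (base : P a)
    (step : ∀ ⦃y z⦄, G.Adj y z → G.dist a y + 1 = G.dist a z → P y → P z)
    {z : V} (hz : G.Reachable a z) : P z := by
  obtain ⟨n, hn⟩ : ∃ n, G.dist a z = n := ⟨_, rfl⟩
  induction n generalizing z with
  | zero => rwa [← hz.dist_eq_zero_iff.mp hn]
  | succ n ih =>
    obtain ⟨y, hyz, hy⟩ := exists_adj_dist_add_one hz (by rintro rfl; simp at hn)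
    exact step hyz hy (ih (hz.trans hyz.symm.reachable) (by omega))

lemma dist_add_dist_of_mem_support {a b c : V} (p : G.Walk a b) (hp : p.length = G.dist a b)
    (hc : c ∈ p.support) : G.dist a c + G.dist c b = G.dist a b := by
  classical
  have hlen := congrArg Walk.length (p.take_spec hc)
  rw [Walk.length_append] at hlen
  have h1 := dist_le (p.takeUntil c hc)
  have h2 := dist_le (p.dropUntil c hc)
  have htri := (p.takeUntil c hc).reachable.dist_triangle_left b
  omega

def Joined (H : G.Subgraph) (a b : V) : Prop :=
  ∃ p : G.Walk a b, p.toSubgraph ≤ H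

namespace Joined

variable {H K : G.Subgraph} {a b c : V}

lemma refl (ha : a ∈ H.verts) : Joined H a a :=
  ⟨.nil, by simpa using ha⟩

lemma _root_.SimpleGraph.Subgraph.Adj.joined (h : H.Adj a b) : Joined H a b :=
  ⟨.cons (H.adj_sub h) .nil, by simpa using h⟩

lemma symm (h : Joined H a b) : Joined H b a := by
  obtain ⟨p, hp⟩ := h
  exact ⟨p.reverse, by rwa [Walk.toSubgraph_reverse]⟩

lemma trans (h : Joined H a b) (h' : Joined H b c) : Joined H a c := by
  obtain ⟨p, hp⟩ := h
  obtain ⟨q, hq⟩ := h'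
  exact ⟨p.append q, by rw [Walk.toSubgraph_append]; exact sup_le hp hq⟩

lemma mono (h : Joined H a b) (hHK : H ≤ K) : Joined K a b := by
  obtain ⟨p, hp⟩ := h
  exact ⟨p, hp.trans hHK⟩

lemma mem_left (h : Joined H a b) : a ∈ H.verts := by
  obtain ⟨p, hp⟩ := h
  exact hp.1 p.start_mem_verts_toSubgraph

lemma reachable (h : Joined H a b) : G.Reachable a b := by
  obtain ⟨p, -⟩ := h
  exact p.reachable

lemma map {G' : SimpleGraph W} (f : G →g G') (h : Joined H a b) :
    Joined (H.map f) (f a) (f b) := by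
  obtain ⟨p, hp⟩ := h
  exact ⟨p.map f, by rw [Walk.toSubgraph_map]; exact Subgraph.map_mono hp⟩

end Joined

lemma joined_iff_exists_reachable {H : G.Subgraph} {a b : V} :
    Joined H a b ↔
      ∃ (ha : a ∈ H.verts) (hb : b ∈ H.verts), H.coe.Reachable ⟨a, ha⟩ ⟨b, hb⟩ := by
  constructor
  · rintro ⟨p, hp⟩
    refine ⟨hp.1 p.start_mem_verts_toSubgraph, hp.1 p.end_mem_verts_toSubgraph, ?_⟩
    exact (p.toSubgraph_connected ⟨_, p.start_mem_verts_toSubgraph⟩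
      ⟨_, p.end_mem_verts_toSubgraph⟩).map (Subgraph.inclusion hp)
  · rintro ⟨ha, hb, ⟨p⟩⟩
    suffices ∀ {u u' : H.verts}, H.coe.Walk u u' → Joined H u u' from this p
    intro u u' p
    induction p with
    | nil => exact Joined.refl (Subtype.prop _)
    | cons h _ ih => exact (show H.Adj _ _ from h).joined.trans ih

end General

section Ball

variable {W : Type*} {G : SimpleGraph V} {a b u u' : V} {r : ℕ}

lemma mem_ball_verts : u ∈ (ball G a r).verts ↔ G.Reachable a u ∧ 2 * G.dist a u ≤ r :=
  and_congr_right fun _ => by omega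

/-- An edge lies in the ball `B_{r/2}(a)` iff its midpoint has distance at most `r/2` from `a`. -/
lemma ball_adj :
    (ball G a r).Adj u u' ↔ G.Adj u u' ∧ G.Reachable a u ∧ G.dist a u + G.dist a u' < r := by
  constructor
  · rintro ⟨h, ⟨hu, hdu⟩, ⟨-, hdu'⟩, hev⟩
    refine ⟨h, hu, ?_⟩
    rcases Nat.even_or_odd r with he | ho
    · have := hev he
      rw [Nat.even_iff] at he
      omega
    · rw [Nat.odd_iff] at ho
      omega
  · rintro ⟨h, hu, hlt⟩
    have := h.diff_dist_adj (u := a)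
    refine ⟨h, ⟨hu, by omega⟩, ⟨hu.trans h.reachable, by omega⟩, fun he hc => ?_⟩
    rw [Nat.even_iff] at he
    omega

lemma mem_ball_deleteVerts :
    u ∈ ((ball G a r).deleteVerts {b}).verts ↔
      (G.Reachable a u ∧ 2 * G.dist a u ≤ r) ∧ u ≠ b := by
  rw [Subgraph.deleteVerts_verts, Set.mem_sdiff, mem_ball_verts, Set.mem_singleton_iff]

lemma ball_deleteVerts_adj : ((ball G a r).deleteVerts {b}).Adj u u' ↔
    u ≠ b ∧ u' ≠ b ∧ G.Adj u u' ∧ G.Reachable a u ∧ G.dist a u + G.dist a u' < r := by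
  rw [Subgraph.deleteVerts_adj, ball_adj]
  constructor
  · rintro ⟨-, hu, -, hu', h⟩
    exact ⟨hu, hu', h⟩
  · rintro ⟨hu, hu', h⟩
    have hb := ball_adj.mpr h
    exact ⟨(ball G a r).edge_vert hb, hu, (ball G a r).edge_vert hb.symm, hu', h⟩

lemma map_ball_deleteVerts_le {G' : SimpleGraph W} (f : G →g G')
    (hf : ∀ c, f c = f a → c = a) :
    ((ball G a r).deleteVerts {a}).map f ≤ (ball G' (f a) r).deleteVerts {f a} := by
  rw [Subgraph.map_le_iff_le_comap]
  constructor
  · intro c hc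
    obtain ⟨⟨hac, hd⟩, hca⟩ := mem_ball_deleteVerts.mp hc
    have := dist_map_le f hac
    exact mem_ball_deleteVerts.mpr ⟨⟨hac.map f, by omega⟩, fun h => hca (hf c h)⟩
  · intro c c' h
    obtain ⟨hc, hc', h, hac, hlt⟩ := ball_deleteVerts_adj.mp h
    have := dist_map_le f hac
    have := dist_map_le f (hac.trans h.reachable)
    exact ⟨h, ball_deleteVerts_adj.mpr ⟨fun e => hc (hf c e), fun e => hc' (hf c' e),
      f.map_adj h, hac.map f, by omega⟩⟩

end Ball

section Perimeter

variable {G : SimpleGraph V} {r : ℕ} {v w z : V}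

lemma joined_of_geodesic_of_perimeter_le (hvw : G.Reachable v w) (Q : G.Walk z w)
    (hQ : Q.length = G.dist z w) (hvQ : v ∉ Q.support)
    (hT : G.dist v z + G.dist v w + G.dist w z ≤ r) :
    Joined ((ball G v r).deleteVerts {v}) z w := by
  induction Q with
  | nil =>
    simp only [Walk.support_nil, List.mem_singleton, dist_self] at hvQ hT
    exact Joined.refl (mem_ball_deleteVerts.mpr ⟨⟨hvw, by omega⟩, fun h => hvQ h.symm⟩)
  | @cons z c w h Q ih =>
    rw [Walk.support_cons, List.mem_cons, not_or] at hvQ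
    have hQ' : Q.length = G.dist c w := length_eq_dist_of_subwalk hQ (Q.isSubwalk_cons h)
    rw [Walk.length_cons, hQ'] at hQ
    have hvz : G.Reachable v z := hvw.trans (Q.cons h).reachable.symm
    have hvc := hvz.dist_triangle_left c
    have hvc' := hvw.dist_triangle_left c
    have hvz' := hvw.dist_triangle_left z
    rw [dist_eq_one_iff_adj.mpr h] at hvc
    have := dist_comm (G := G) (u := w) (v := c)
    have := dist_comm (G := G) (u := w) (v := z)
    have hcv : c ≠ v := fun e => hvQ.2 (e ▸ Q.start_mem_support)
    exact (ball_deleteVerts_adj.mpr ⟨fun e => hvQ.1 e.symm, hcv, h, hvz, by omega⟩).joined.trans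
      (ih hvw hQ' hvQ.2 (by omega))

/-- If some geodesic from `z` to `w` avoids `v`, it stays in `B_{r/2}(v)`; otherwise `z` lies
behind `v` as seen from `w`, hence close to `v`, and one step along the given walk keeps the
perimeter at most `r`. -/
lemma joined_of_perimeter_le (hvw : G.Reachable v w)
    (hz : Joined ((ball G w r).deleteVerts {v}) z w)
    (hT : G.dist v z + G.dist v w + G.dist w z ≤ r) :
    Joined ((ball G v r).deleteVerts {v}) z w := by
  obtain ⟨R, hR⟩ := hz
  have hwv : w ≠ v := (mem_ball_deleteVerts.mp (hR.1 R.end_mem_verts_toSubgraph)).2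
  induction R with
  | nil => exact joined_of_geodesic_of_perimeter_le hvw .nil (by simp) (by simpa using hwv.symm) hT
  | @cons z z₁ w h R ih =>
    simp only [Walk.toSubgraph, sup_le_iff, subgraphOfAdj_le_iff] at hR
    obtain ⟨hzz₁, hR⟩ := hR
    obtain ⟨hzv, hz₁v, -, hwz, hlt⟩ := ball_deleteVerts_adj.mp hzz₁
    by_cases hgeo : ∃ Q : G.Walk z w, Q.length = G.dist z w ∧ v ∉ Q.support
    · obtain ⟨Q, hQ, hvQ⟩ := hgeo
      exact joined_of_geodesic_of_perimeter_le hvw Q hQ hvQ hT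
    push Not at hgeo
    obtain ⟨Q, hQ⟩ := hwz.symm.exists_walk_length_eq_dist
    have hsplit := dist_add_dist_of_mem_support Q hQ (hgeo Q hQ)
    have hvz : G.Reachable v z := hvw.trans hwz
    have hvz₁ := hvz.dist_triangle_left z₁
    have hvw₁ := hvw.pos_dist_of_ne hwv.symm
    rw [dist_eq_one_iff_adj.mpr h] at hvz₁
    rw [dist_comm (u := z) (v := v), dist_comm (u := z) (v := w)] at hsplit
    exact (ball_deleteVerts_adj.mpr ⟨hzv, hz₁v, h, hvz, by omega⟩).joined.trans
      (ih hvw (by omega) hR hwv)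

end Perimeter

section Cut

variable {G : SimpleGraph V} {r : ℕ} {v w : V}

@[simp] lemma vertexCut_adj_inl_inl {a b : {u : V // u ≠ v}} :
    (vertexCut G r v).Adj (.inl a) (.inl b) ↔ G.Adj a b :=
  ⟨fun h => h.elim id fun h => (h : G.Adj b a).symm, Or.inl⟩

@[simp] lemma vertexCut_adj_inl_inr {a : {u : V // u ≠ v}} {c : VComp G r v} :
    (vertexCut G r v).Adj (.inl a) (.inr c) ↔
      G.Adj v a ∧ ∃ h, (pBallG G r v).connectedComponentMk ⟨a, h⟩ = c :=
  ⟨fun h => h.elim id False.elim, Or.inl⟩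

def vertexCutProj (G : SimpleGraph V) (r : ℕ) (v : V) : vertexCut G r v →g G where
  toFun := Sum.elim Subtype.val fun _ => v
  map_rel' := by
    rintro (a | c) (b | c') h
    · exact vertexCut_adj_inl_inl.mp h
    · exact (vertexCut_adj_inl_inr.mp h).1.symm
    · exact (vertexCut_adj_inl_inr.mp h.symm).1
    · exact h.elim False.elim False.elim

@[simp] lemma vertexCutProj_inl (a : {u : V // u ≠ v}) : vertexCutProj G r v (.inl a) = a := rfl

lemma eq_inl_of_vertexCutProj_eq (hwv : w ≠ v) {b : VCutVert G r v}
    (h : vertexCutProj G r v b = w) : b = .inl ⟨w, hwv⟩ := by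
  rcases b with b | c
  · exact congrArg _ (Subtype.ext h)
  · exact absurd h.symm hwv

/-- `z'` represents `z` in the cut graph as seen from `w`: `v` is represented by the slice
containing `w`. -/
def IsLift (w z : V) (z' : VCutVert G r v) : Prop :=
  (∃ h : z ≠ v, z' = .inl ⟨z, h⟩) ∨
    (z = v ∧ ∃ hw, z' = .inr ((pBallG G r v).connectedComponentMk ⟨w, hw⟩))

namespace IsLift

variable {z : V} {z' z'' : VCutVert G r v}

lemma proj (h : IsLift w z z') : vertexCutProj G r v z' = z := by
  rcases h with ⟨_, rfl⟩ | ⟨rfl, _, rfl⟩ <;> rfl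

lemma unique (h : IsLift w z z') (h' : IsLift w z z'') : z' = z'' := by
  rcases h with ⟨hz, rfl⟩ | ⟨rfl, _, rfl⟩ <;>
    rcases h' with ⟨hz', rfl⟩ | ⟨h, _, rfl⟩
  · rfl
  · exact absurd h hz
  · exact absurd rfl hz'
  · rfl

end IsLift

lemma IsCopyNear.isLift {hwv : w ≠ v} {x : V} {x' : VCutVert G r v}
    (h : IsCopyNear G r v w hwv x x') : IsLift w x x' := by
  rcases h with h | ⟨rfl, ⟨c, rfl⟩, hadj⟩
  · exact Or.inl h
  · obtain ⟨-, hw, hc⟩ := vertexCut_adj_inl_inr.mp hadj.symm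
    exact Or.inr ⟨rfl, hw, by rw [hc]⟩

/-- The vertices whose representatives keep their distance from `w` in the cut graph. -/
def Accessible (G : SimpleGraph V) (r : ℕ) (v w z : V) : Prop :=
  z = v ∨ Joined ((ball G w r).deleteVerts {v}) z w

lemma accessible_of_adj (hwv : w ≠ v) (hr : 2 ≤ r) {x : V} (hx : G.Adj w x) :
    Accessible G r v w x := by
  by_cases hxv : x = v
  · exact Or.inl hxv
  refine Or.inr (ball_deleteVerts_adj.mpr ⟨hxv, hwv, hx.symm, hx.reachable, ?_⟩).joined
  rw [dist_eq_one_iff_adj.mpr hx, dist_self]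
  omega

lemma joined_of_dist_lt {z : V} (hz : G.Reachable w z) (hlt : G.dist w z < G.dist w v)
    (h2 : 2 * G.dist w z ≤ r) : Joined ((ball G w r).deleteVerts {v}) z w := by
  revert hlt h2
  refine induction_on_dist (P := fun z => G.dist w z < G.dist w v → 2 * G.dist w z ≤ r →
    Joined ((ball G w r).deleteVerts {v}) z w) (fun hlt _ => Joined.refl ?_)
    (fun y z hyz hy ih hlt h2 => ?_) hz
  · refine mem_ball_deleteVerts.mpr ⟨⟨.refl w, by simp⟩, fun h => ?_⟩
    rw [h, dist_self] at hlt
    exact lt_irrefl _ hlt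
  · have hzv : z ≠ v := by rintro rfl; omega
    have hyv : y ≠ v := by rintro rfl; omega
    exact (ball_deleteVerts_adj.mpr ⟨hzv, hyv, hyz.symm, .of_dist_ne_zero (by omega),
      by omega⟩).joined.trans (ih (by omega) (by omega))

lemma vertexCut_adj_slice {u : V} (hu : Joined ((ball G w r).deleteVerts {v}) u w)
    (huv : G.Adj u v) (hr : G.dist w u + G.dist w v < r)
    (hw : w ∈ ((ball G v r).deleteVerts {v}).verts) :
    (vertexCut G r v).Adj (.inl ⟨u, huv.ne⟩)
      (.inr ((pBallG G r v).connectedComponentMk ⟨w, hw⟩)) := by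
  have hvw : G.Reachable v w := huv.symm.reachable.trans hu.reachable
  have hT : G.dist v u + G.dist v w + G.dist w u ≤ r := by
    rw [dist_eq_one_iff_adj.mpr huv.symm, dist_comm (u := v)]
    omega
  obtain ⟨hu', _, hreach⟩ := joined_iff_exists_reachable.mp (joined_of_perimeter_le hvw hu hT)
  exact vertexCut_adj_inl_inr.mpr ⟨huv.symm, hu', ConnectedComponent.sound hreach⟩

lemma vertexCut_adj_of_isLift {a b : V} {a' b' : VCutVert G r v} (hab : G.Adj a b)
    (hr : G.dist w a + G.dist w b < r) (ha : Accessible G r v w a) (hb : Accessible G r v w b)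
    (ha' : IsLift w a a') (hb' : IsLift w b b') : (vertexCut G r v).Adj a' b' := by
  rcases ha' with ⟨hav, rfl⟩ | ⟨rfl, hw, rfl⟩ <;>
    rcases hb' with ⟨hbv, rfl⟩ | ⟨rfl, hw', rfl⟩
  · exact vertexCut_adj_inl_inl.mpr hab
  · exact vertexCut_adj_slice (ha.resolve_left hav) hab hr hw'
  · exact (vertexCut_adj_slice (hb.resolve_left hbv) hab.symm (by omega) hw).symm
  · exact absurd rfl hab.ne

end Cut

section Lift

variable {G : SimpleGraph V} {r : ℕ} {v w : V} (hwv : w ≠ v)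

lemma exists_walk_vertexCut_of_isLift {z : V} {z' : VCutVert G r v} (hz : G.Reachable w z)
    (h2 : 2 * G.dist w z ≤ r) (hacc : Accessible G r v w z) (hz' : IsLift w z z') :
    ∃ P : (vertexCut G r v).Walk (.inl ⟨w, hwv⟩) z', P.length = G.dist w z := by
  refine induction_on_dist (P := fun z => 2 * G.dist w z ≤ r → Accessible G r v w z →
    ∀ z', IsLift w z z' →
      ∃ P : (vertexCut G r v).Walk (.inl ⟨w, hwv⟩) z', P.length = G.dist w z)
    (fun _ _ z' hz' => ?_) (fun y z hyz hy ih h2 hacc z' hz' => ?_) hz h2 hacc z' hz'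
  · obtain rfl := hz'.unique (Or.inl ⟨hwv, rfl⟩)
    exact ⟨.nil, by rw [dist_self]; rfl⟩
  have hwz : G.Reachable w z := .of_dist_ne_zero (by omega)
  have hwy : G.Reachable w y := hwz.trans hyz.symm.reachable
  have hyacc : Accessible G r v w y := by
    by_cases hyv : y = v
    · exact Or.inl hyv
    rcases hacc with rfl | hzacc
    · exact Or.inr (joined_of_dist_lt hwy (by omega) (by omega))
    · have hzv := (mem_ball_deleteVerts.mp hzacc.mem_left).2
      exact Or.inr
        ((ball_deleteVerts_adj.mpr ⟨hyv, hzv, hyz, hwy, by omega⟩).joined.trans hzacc)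
  obtain ⟨y', hy'⟩ : ∃ y' : VCutVert G r v, IsLift w y y' := by
    by_cases hyv : y = v
    · rw [hyv] at hy hwy
      exact ⟨_, Or.inr ⟨hyv, mem_ball_deleteVerts.mpr
        ⟨⟨hwy.symm, by rw [dist_comm]; omega⟩, hwv⟩, rfl⟩⟩
    · exact ⟨_, Or.inl ⟨hyv, rfl⟩⟩
  obtain ⟨P, hP⟩ := ih (by omega) hyacc y' hy'
  have hadj := vertexCut_adj_of_isLift hyz (by omega) hyacc hacc hy' hz'
  exact ⟨P.concat hadj, (P.length_concat hadj).trans (by omega)⟩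

lemma dist_vertexCut_of_isLift {z : V} {z' : VCutVert G r v} (hz : z ∈ (ball G w r).verts)
    (hacc : Accessible G r v w z) (hz' : IsLift w z z') :
    (vertexCut G r v).Reachable (.inl ⟨w, hwv⟩) z' ∧
      (vertexCut G r v).dist (.inl ⟨w, hwv⟩) z' = G.dist w z := by
  obtain ⟨hwz, h2⟩ := mem_ball_verts.mp hz
  obtain ⟨P, hP⟩ := exists_walk_vertexCut_of_isLift hwv hwz h2 hacc hz'
  refine ⟨P.reachable, le_antisymm (hP ▸ dist_le P) ?_⟩
  simpa only [hz'.proj, vertexCutProj_inl] using dist_map_le (vertexCutProj G r v) P.reachable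

lemma mem_puncturedBall_of_isLift {z : V} {z' : VCutVert G r v}
    (hz : z ∈ ((ball G w r).deleteVerts {w}).verts) (hacc : Accessible G r v w z)
    (hz' : IsLift w z z') :
    z' ∈ ((ball (vertexCut G r v) (.inl ⟨w, hwv⟩) r).deleteVerts
      {.inl ⟨w, hwv⟩}).verts := by
  obtain ⟨hreach, hdist⟩ := dist_vertexCut_of_isLift hwv (Subgraph.deleteVerts_le.1 hz) hacc hz'
  obtain ⟨⟨-, h2⟩, hzw⟩ := mem_ball_deleteVerts.mp hz
  refine mem_ball_deleteVerts.mpr ⟨⟨hreach, hdist ▸ h2⟩, fun h => hzw ?_⟩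
  rw [← hz'.proj, h]
  rfl

lemma puncturedBall_adj_of_isLift {a b : V} {a' b' : VCutVert G r v}
    (hab : ((ball G w r).deleteVerts {w}).Adj a b)
    (ha : Accessible G r v w a) (hb : Accessible G r v w b)
    (ha' : IsLift w a a') (hb' : IsLift w b b') :
    ((ball (vertexCut G r v) (.inl ⟨w, hwv⟩) r).deleteVerts {.inl ⟨w, hwv⟩}).Adj a' b' := by
  have hma := ((ball G w r).deleteVerts {w}).edge_vert hab
  have hmb := ((ball G w r).deleteVerts {w}).edge_vert hab.symm
  obtain ⟨-, -, h, -, hlt⟩ := ball_deleteVerts_adj.mp hab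
  obtain ⟨hreach, hda⟩ := dist_vertexCut_of_isLift hwv (Subgraph.deleteVerts_le.1 hma) ha ha'
  obtain ⟨-, hdb⟩ := dist_vertexCut_of_isLift hwv (Subgraph.deleteVerts_le.1 hmb) hb hb'
  exact ball_deleteVerts_adj.mpr
    ⟨(mem_ball_deleteVerts.mp (mem_puncturedBall_of_isLift hwv hma ha ha')).2,
    (mem_ball_deleteVerts.mp (mem_puncturedBall_of_isLift hwv hmb hb hb')).2,
    vertexCut_adj_of_isLift h hlt ha hb ha' hb', hreach, by omega⟩

lemma accessible_and_joined_of_walk {a y : V} {a' y' : VCutVert G r v} (q : G.Walk a y)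
    (hq : q.toSubgraph ≤ (ball G w r).deleteVerts {w}) (hvq : v ∉ q.support.tail)
    (hy : Accessible G r v w y) (ha' : IsLift w a a') (hy' : IsLift w y y') :
    Accessible G r v w a ∧
      Joined ((ball (vertexCut G r v) (.inl ⟨w, hwv⟩) r).deleteVerts
        {.inl ⟨w, hwv⟩}) a' y' := by
  induction q generalizing a' with
  | nil =>
    obtain rfl := ha'.unique hy'
    have hyH := hq.1 (Walk.start_mem_verts_toSubgraph _)
    exact ⟨hy, .refl (mem_puncturedBall_of_isLift hwv hyH hy hy')⟩
  | @cons a a₁ y h q ih =>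
    simp only [Walk.toSubgraph, sup_le_iff, subgraphOfAdj_le_iff] at hq
    simp only [Walk.support_cons, List.tail_cons] at hvq
    have ha₁v : a₁ ≠ v := fun e => hvq (e ▸ q.start_mem_support)
    have ha₁' : IsLift (G := G) (r := r) w a₁ (.inl ⟨a₁, ha₁v⟩) :=
      Or.inl ⟨ha₁v, rfl⟩
    obtain ⟨ha₁, hJ⟩ := ih hq.2 (fun e => hvq (List.mem_of_mem_tail e)) hy ha₁' hy'
    have ha : Accessible G r v w a := by
      by_cases hav : a = v
      · exact Or.inl hav
      obtain ⟨-, -, -, hwa, hlt⟩ := ball_deleteVerts_adj.mp hq.1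
      exact Or.inr ((ball_deleteVerts_adj.mpr ⟨hav, ha₁v, h, hwa, hlt⟩).joined.trans
        (ha₁.resolve_left ha₁v))
    exact ⟨ha, (puncturedBall_adj_of_isLift hwv hq.1 ha ha₁ ha' ha₁').joined.trans hJ⟩

end Lift

section Main

variable {G : SimpleGraph V} {r : ℕ} {v w : V}

lemma _root_.SimpleGraph.Walk.IsPath.start_notMem_support_tail {a b : V} {q : G.Walk a b}
    (hq : q.IsPath) : a ∉ q.support.tail := by
  have h := hq.support_nodup
  rw [← Walk.cons_tail_support] at h
  exact (List.nodup_cons.mp h).1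

/-- Split the path at `v`: each of its other vertices is joined to `w` inside `B_{r/2}(w) - v`
through an end of the path. -/
lemma joined_vertexCut_of_joined (hwv : w ≠ v) (hr : 2 ≤ r) {x y : V} {x' y' : VCutVert G r v}
    (hx : G.Adj w x) (hy : G.Adj w y) (hx' : IsLift w x x') (hy' : IsLift w y y')
    (hxy : Joined ((ball G w r).deleteVerts {w}) x y) :
    Joined ((ball (vertexCut G r v) (.inl ⟨w, hwv⟩) r).deleteVerts
      {.inl ⟨w, hwv⟩}) x' y' := by
  classical
  obtain ⟨p, hp⟩ := hxy
  have hpath := p.bypass_isPath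
  have hp' := Walk.toSubgraph_bypass_le_toSubgraph.trans hp
  have hxacc := accessible_of_adj hwv hr hx
  have hyacc := accessible_of_adj hwv hr hy
  by_cases hv : v ∈ p.bypass.support
  · obtain ⟨⟨hwv_reach, h2⟩, -⟩ :=
      mem_ball_deleteVerts.mp (hp'.1 ((p.bypass.mem_verts_toSubgraph).mpr hv))
    have hw : w ∈ ((ball G v r).deleteVerts {v}).verts :=
      mem_ball_deleteVerts.mpr ⟨⟨hwv_reach.symm, by rwa [dist_comm]⟩, hwv⟩
    have hv' : IsLift w v (.inr ((pBallG G r v).connectedComponentMk ⟨w, hw⟩)) :=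
      Or.inr ⟨rfl, hw, rfl⟩
    have hle : (p.bypass.takeUntil v hv).toSubgraph ≤ (ball G w r).deleteVerts {w} ∧
        (p.bypass.dropUntil v hv).toSubgraph ≤ (ball G w r).deleteVerts {w} := by
      rw [← sup_le_iff, ← Walk.toSubgraph_append, p.bypass.take_spec hv]
      exact hp'
    have hvx := accessible_and_joined_of_walk hwv (p.bypass.takeUntil v hv).reverse
      (by rw [Walk.toSubgraph_reverse]; exact hle.1)
      (hpath.takeUntil hv).reverse.start_notMem_support_tail hxacc hv' hx'
    have hvy := accessible_and_joined_of_walk hwv (p.bypass.dropUntil v hv) hle.2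
      (hpath.dropUntil hv).start_notMem_support_tail hyacc hv' hy'
    exact hvx.2.symm.trans hvy.2
  · exact (accessible_and_joined_of_walk hwv p.bypass hp' (fun h => hv (List.mem_of_mem_tail h))
      hyacc hx' hy').2

lemma joined_of_joined_vertexCut (hwv : w ≠ v) {a' b' : VCutVert G r v}
    (h : Joined ((ball (vertexCut G r v) (.inl ⟨w, hwv⟩) r).deleteVerts
      {.inl ⟨w, hwv⟩}) a' b') :
    Joined ((ball G w r).deleteVerts {w}) (vertexCutProj G r v a') (vertexCutProj G r v b') :=
  (h.map (vertexCutProj G r v)).mono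
    (map_ball_deleteVerts_le _ fun _ hb => eq_inl_of_vertexCutProj_eq hwv hb)

end Main

theorem stmt18_general {V : Type u} (G : SimpleGraph V) (r : ℕ) (v w : V) (hwv : w ≠ v)
    (x y : V) (hx : G.Adj w x) (hy : G.Adj w y)
    (x' y' : VCutVert G r v)
    (hx' : IsCopyNear G r v w hwv x x') (hy' : IsCopyNear G r v w hwv y y') :
    ((∃ (hx2 : x ∈ ((ball G w r).deleteVerts {w}).verts)
        (hy2 : y ∈ ((ball G w r).deleteVerts {w}).verts),
        (pBallG G r w).Reachable ⟨x, hx2⟩ ⟨y, hy2⟩) ↔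
      (∃ (hx2 : x' ∈ ((ball (vertexCut G r v) (Sum.inl ⟨w, hwv⟩) r).deleteVerts
          {Sum.inl ⟨w, hwv⟩}).verts)
        (hy2 : y' ∈ ((ball (vertexCut G r v) (Sum.inl ⟨w, hwv⟩) r).deleteVerts
          {Sum.inl ⟨w, hwv⟩}).verts),
        (pBallG (vertexCut G r v) r (Sum.inl ⟨w, hwv⟩)).Reachable ⟨x', hx2⟩ ⟨y', hy2⟩)) := by
  constructor
  · intro hxy
    replace hxy := joined_iff_exists_reachable.mpr hxy
    have hr : 2 ≤ r := by
      have h2 := (mem_ball_deleteVerts.mp hxy.mem_left).1.2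
      rw [dist_eq_one_iff_adj.mpr hx] at h2
      omega
    exact joined_iff_exists_reachable.mp
      (joined_vertexCut_of_joined hwv hr hx hy hx'.isLift hy'.isLift hxy)
  · intro h
    have hxy := joined_of_joined_vertexCut hwv (joined_iff_exists_reachable.mpr h)
    rw [hx'.isLift.proj, hy'.isLift.proj] at hxy
    exact joined_iff_exists_reachable.mp hxy

/-- Let `G'` be obtained from `G` by `r`-locally cutting a vertex `v`, and let `w ≠ v`.
Two neighbours `x` and `y` of `w` lie in the same component of the punctured ball
`B_{r/2}(w) - w` in `G` iff their copies lie in the same component of the punctured ball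
around (the copy of) `w` in `G'`. -/
theorem stmt18 {V : Type u} (G : SimpleGraph V) (r : ℕ) (hr : 1 ≤ r) (v w : V) (hwv : w ≠ v)
    (x y : V) (hx : G.Adj w x) (hy : G.Adj w y)
    (x' y' : VCutVert G r v)
    (hx' : IsCopyNear G r v w hwv x x') (hy' : IsCopyNear G r v w hwv y y') :
    ((∃ (hx2 : x ∈ ((ball G w r).deleteVerts {w}).verts)
        (hy2 : y ∈ ((ball G w r).deleteVerts {w}).verts),
        (pBallG G r w).Reachable ⟨x, hx2⟩ ⟨y, hy2⟩) ↔
      (∃ (hx2 : x' ∈ ((ball (vertexCut G r v) (Sum.inl ⟨w, hwv⟩) r).deleteVerts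
          {Sum.inl ⟨w, hwv⟩}).verts)
        (hy2 : y' ∈ ((ball (vertexCut G r v) (Sum.inl ⟨w, hwv⟩) r).deleteVerts
          {Sum.inl ⟨w, hwv⟩}).verts),
        (pBallG (vertexCut G r v) r (Sum.inl ⟨w, hwv⟩)).Reachable ⟨x', hx2⟩ ⟨y', hy2⟩)) :=
  stmt18_general G r v w hwv x y hx hy x' y' hx' hy'

end LocalSep
end
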